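/- arXiv:2405.02056 — 6 statements merged into one kernel-verified Lean document; each statement's English description precedes it below -/
import Mathlib

section
/- If X has more than one point, then the girth of Γ(C(X)) equals 3. -/
open Set

/-- The zero set of a continuous real-valued function. -/
def zeroSet {X : Type*} [TopologicalSpace X] (f : C(X, ℝ)) : Set X := {x | f x = 0}

/-- The zero-set intersection graph `Γ(C(X))`: vertices are the non-units of `C(X)`
(those `f` with nonempty zero set), and distinct vertices `f`, `g` are adjacent
iff `Z(f) ∩ Z(g) ≠ ∅`. -/
def zGraph (X : Type*) [TopologicalSpace X] :
    SimpleGraph {f : C(X, ℝ) // (zeroSet f).Nonempty} where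
  Adj f g := f ≠ g ∧ (zeroSet f.1 ∩ zeroSet g.1).Nonempty
  symm := by
    constructor
    rintro f g ⟨hne, hx⟩
    exact ⟨hne.symm, by rwa [Set.inter_comm]⟩
  loopless := ⟨fun f h => h.1 rfl⟩

/-- If X has more than one point, the girth of Γ(C(X)) equals 3. -/
theorem zGraph_egirth_eq_three
    (X : Type*) [TopologicalSpace X] [T2Space X] [CompletelyRegularSpace X] [Nontrivial X] :
    (zGraph X).egirth = 3 := by
  obtain ⟨x0, x1, hne⟩ := exists_pair_ne X
  obtain ⟨f, hfc, hf0, hf1⟩ := CompletelyRegularSpace.completely_regular x1 {x0}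
    isClosed_singleton (by simpa [eq_comm] using hne)
  set g : C(X, ℝ) := ⟨fun x => (f x : ℝ), by continuity⟩ with hg
  have hgx1 : g x1 = 0 := by simp [hg, hf0]
  have hgx0 : g x0 = 1 := by
    have := hf1 (mem_singleton x0)
    simp [hg, this]
  have hx1mem : ∀ (c : ℝ), x1 ∈ zeroSet (c • g) := by
    intro c
    simp [zeroSet, hgx1]
  -- three vertices
  let mk : ℝ → {f : C(X, ℝ) // (zeroSet f).Nonempty} :=
    fun c => ⟨c • g, ⟨x1, hx1mem c⟩⟩
  have hval : ∀ c : ℝ, (mk c).1 x0 = c := by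
    intro c; simp [mk, hgx0]
  have hinj : ∀ c d : ℝ, c ≠ d → mk c ≠ mk d := by
    intro c d hcd h
    apply hcd
    have := congrArg (fun v => v.1 x0) h
    simpa [hval] using this
  have hadj : ∀ c d : ℝ, c ≠ d → (zGraph X).Adj (mk c) (mk d) := by
    intro c d hcd
    exact ⟨hinj c d hcd, ⟨x1, hx1mem c, hx1mem d⟩⟩
  -- the triangle
  have h01 := hadj 0 1 (by norm_num)
  have h12 := hadj 1 2 (by norm_num)
  have h20 := hadj 2 0 (by norm_num)
  let w : (zGraph X).Walk (mk 0) (mk 0) :=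
    SimpleGraph.Walk.cons h01 (SimpleGraph.Walk.cons h12 (SimpleGraph.Walk.cons h20 SimpleGraph.Walk.nil))
  have hw : w.IsCycle := by
    rw [SimpleGraph.Walk.isCycle_def]
    refine ⟨?_, by simp [w], ?_⟩
    all_goals
      have n01 := hinj 0 1 (by norm_num)
      have n02 := hinj 0 2 (by norm_num)
      have n12 := hinj 1 2 (by norm_num)
      have n10 := hinj 1 0 (by norm_num)
      have n20 := hinj 2 0 (by norm_num)
      have n21 := hinj 2 1 (by norm_num)
      simp [w, SimpleGraph.Walk.isTrail_def, List.nodup_cons]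
      tauto
  refine le_antisymm ?_ SimpleGraph.three_le_egirth
  have : (zGraph X).egirth ≤ (w.length : ℕ∞) := by
    rw [SimpleGraph.egirth]
    exact iInf_le_of_le (mk 0) (iInf_le_of_le w (iInf_le _ hw))
  simpa [w] using this
end

section
/- Let X have more than two points and let f, g be distinct vertices of Γ(C(X)). Then: (1) the length of a shortest cycle of Γ(C(X)) containing both f and g equals 3 if and only if Z(f) ∩ Z(g) ≠ ∅; (2) the length of a shortest cycle of Γ(C(X)) containing both f and g equals 4 if and only if Z(f) ∩ Z(g) = ∅. -/
open Set

/-- The length of a smallest cycle in G passing through both u and v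
(as an extended natural number; ⊤ if there is no such cycle). -/
noncomputable def smallestCycleThrough {V : Type*} (G : SimpleGraph V) (u v : V) : ℕ∞ :=
  ⨅ (w : G.Walk u u) (_ : w.IsCycle) (_ : v ∈ w.support), (w.length : ℕ∞)

lemma zg_triangle_cycle {V : Type*} {G : SimpleGraph V} {u v w : V}
    (huv : G.Adj u v) (hvw : G.Adj v w) (hwu : G.Adj w u) :
    ∃ c : G.Walk u u, c.IsCycle ∧ v ∈ c.support ∧ c.length = 3 := by
  refine ⟨.cons huv (.cons hvw (.cons hwu .nil)), ?_, by simp, rfl⟩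
  have h1 := huv.ne
  have h2 := hvw.ne
  have h3 := hwu.ne
  rw [SimpleGraph.Walk.isCycle_def, SimpleGraph.Walk.isTrail_def]
  refine ⟨?_, by simp, ?_⟩
  · simp [Sym2.eq, Sym2.rel_iff', h1, h2, h3, h1.symm, h2.symm, h3.symm]
  · simp [h1, h2, h3, h1.symm, h2.symm, h3.symm]

lemma zg_square_cycle {V : Type*} {G : SimpleGraph V} {u v w x : V}
    (huv : G.Adj u v) (hvw : G.Adj v w) (hwx : G.Adj w x) (hxu : G.Adj x u)
    (huw : u ≠ w) (hvx : v ≠ x) :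
    ∃ c : G.Walk u u, c.IsCycle ∧ w ∈ c.support ∧ c.length = 4 := by
  refine ⟨.cons huv (.cons hvw (.cons hwx (.cons hxu .nil))), ?_, by simp, rfl⟩
  have h1 := huv.ne
  have h2 := hvw.ne
  have h3 := hwx.ne
  have h4 := hxu.ne
  rw [SimpleGraph.Walk.isCycle_def, SimpleGraph.Walk.isTrail_def]
  refine ⟨?_, by simp, ?_⟩
  · simp [Sym2.eq, Sym2.rel_iff', h1, h2, h3, h4, h1.symm, h2.symm, h3.symm, h4.symm,
      huw, hvx, huw.symm, hvx.symm]
  · simp [h1, h2, h3, h4, h1.symm, h2.symm, h3.symm, h4.symm, huw, hvx, huw.symm, hvx.symm]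

lemma zg_length_three_adj {V : Type*} {G : SimpleGraph V} {u v : V} (hne : u ≠ v)
    (w : G.Walk u u) (hlen : w.length = 3) (hv : v ∈ w.support) : G.Adj u v := by
  cases w with
  | nil => simp at hlen
  | cons h1 p =>
    cases p with
    | nil => simp at hlen
    | cons h2 q =>
      cases q with
      | nil => simp at hlen
      | cons h3 r =>
        cases r with
        | nil =>
          simp at hv
          rcases hv with h | h | h | h
          · exact absurd h.symm hne
          · exact h ▸ h1
          · exact (h ▸ h3).symm
          · exact absurd h.symm hne
        | cons h4 s => simp [SimpleGraph.Walk.length_cons] at hlen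

lemma zg_exists_third (X : Type*) (hX : ∃ a b c : X, a ≠ b ∧ a ≠ c ∧ b ≠ c) (x y : X) :
    ∃ z : X, z ≠ x ∧ z ≠ y := by
  obtain ⟨a, b, c, hab, hac, hbc⟩ := hX
  by_contra h
  push_neg at h
  have ha := h a; have hb := h b; have hc := h c
  rcases Classical.em (a = x) with h1 | h1 <;> rcases Classical.em (b = x) with h2 | h2 <;>
    rcases Classical.em (c = x) with h3 | h3 <;> simp_all

lemma zg_exists_psi (X : Type*) [TopologicalSpace X] [T2Space X] [CompletelyRegularSpace X]
    (x y z : X) (hzx : z ≠ x) (hzy : z ≠ y) :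
    ∃ ψ : C(X, ℝ), ψ x = 0 ∧ ψ y = 0 ∧ ψ z = 1 := by
  have hK : IsClosed ({x, y} : Set X) := (Set.Finite.insert x (Set.finite_singleton y)).isClosed
  have hz : z ∉ ({x, y} : Set X) := by simp [hzx, hzy]
  obtain ⟨φ, hφc, hφz, hφK⟩ := CompletelyRegularSpace.completely_regular z {x, y} hK hz
  refine ⟨⟨fun p => 1 - (φ p : ℝ), by fun_prop⟩, ?_, ?_, ?_⟩
  · have := hφK (show x ∈ ({x,y}:Set X) by simp)
    simp [this]
  · have := hφK (show y ∈ ({x,y}:Set X) by simp)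
    simp [this]
  · simp [hφz]

/-- For distinct vertices f, g of Γ(C(X)) (X with more than two points): the smallest
cycle through f and g has length 3 iff Z(f) ∩ Z(g) ≠ ∅, and length 4 iff Z(f) ∩ Z(g) = ∅. -/
theorem zGraph_smallestCycleThrough
    (X : Type*) [TopologicalSpace X] [T2Space X] [CompletelyRegularSpace X]
    (hX : ∃ a b c : X, a ≠ b ∧ a ≠ c ∧ b ≠ c)
    (f g : {f : C(X, ℝ) // (zeroSet f).Nonempty}) (hfg : f ≠ g) :
    (smallestCycleThrough (zGraph X) f g = 3 ↔ (zeroSet f.1 ∩ zeroSet g.1).Nonempty) ∧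
    (smallestCycleThrough (zGraph X) f g = 4 ↔ zeroSet f.1 ∩ zeroSet g.1 = ∅) := by
  -- Case A: the intersection is nonempty ⇒ smallest cycle = 3
  have keyA : (zeroSet f.1 ∩ zeroSet g.1).Nonempty →
      smallestCycleThrough (zGraph X) f g = 3 := by
    rintro ⟨x, hxf, hxg⟩
    have hxf' : f.1 x = 0 := hxf
    have hxg' : g.1 x = 0 := hxg
    -- construct a third vertex h vanishing at x, distinct from f and g
    have hfg1 : f.1 ≠ g.1 := fun e => hfg (Subtype.ext e)
    obtain ⟨h, hh0, hhf, hhg⟩ :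
        ∃ h : C(X, ℝ), h x = 0 ∧ h ≠ f.1 ∧ h ≠ g.1 := by
      by_cases hf0 : f.1 = 0
      · refine ⟨g.1 + g.1, by simp [hxg'], ?_, ?_⟩
        · intro e
          apply hfg1
          rw [hf0]
          ext p
          have := ContinuousMap.congr_fun e p
          simp [hf0] at this ⊢
          linarith
        · intro e
          apply hfg1
          rw [hf0]
          ext p
          have := ContinuousMap.congr_fun e p
          simp at this ⊢
          linarith
      · by_cases hg0 : g.1 = 0
        · refine ⟨f.1 + f.1, by simp [hxf'], ?_, ?_⟩
          · intro e
            apply hf0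
            ext p
            have := ContinuousMap.congr_fun e p
            simp at this ⊢
            linarith
          · intro e
            apply hf0
            ext p
            have := ContinuousMap.congr_fun e p
            simp [hg0] at this ⊢
            linarith
        · refine ⟨f.1 + g.1, by simp [hxf', hxg'], ?_, ?_⟩
          · intro e
            apply hg0
            ext p
            have := ContinuousMap.congr_fun e p
            simp at this ⊢
            linarith
          · intro e
            apply hf0
            ext p
            have := ContinuousMap.congr_fun e p
            simp at this ⊢
            linarith
    set hv : {f : C(X, ℝ) // (zeroSet f).Nonempty} := ⟨h, ⟨x, hh0⟩⟩ with hvdef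
    have hvf : hv ≠ f := fun e => hhf (congrArg Subtype.val e)
    have hvg : hv ≠ g := fun e => hhg (congrArg Subtype.val e)
    have adj_fg : (zGraph X).Adj f g := ⟨hfg, ⟨x, hxf, hxg⟩⟩
    have adj_gh : (zGraph X).Adj g hv := ⟨Ne.symm hvg, ⟨x, hxg, hh0⟩⟩
    have adj_hf : (zGraph X).Adj hv f := ⟨hvf, ⟨x, hh0, hxf⟩⟩
    obtain ⟨c, hc, hgc, hclen⟩ := zg_triangle_cycle adj_fg adj_gh adj_hf
    rw [smallestCycleThrough]
    apply le_antisymm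
    · apply le_trans (iInf_le _ c)
      apply le_trans (iInf_le _ hc)
      apply le_trans (iInf_le _ hgc)
      simp [hclen]
    · refine le_iInf fun w => le_iInf fun hw => le_iInf fun _ => ?_
      exact_mod_cast hw.three_le_length
  -- Case B: the intersection is empty ⇒ smallest cycle = 4
  have keyB : zeroSet f.1 ∩ zeroSet g.1 = ∅ →
      smallestCycleThrough (zGraph X) f g = 4 := by
    intro hempty
    obtain ⟨x, hxf⟩ := f.2
    obtain ⟨y, hyg⟩ := g.2
    have hxf' : f.1 x = 0 := hxf
    have hyg' : g.1 y = 0 := hyg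
    have hyf : f.1 y ≠ 0 := by
      intro h0
      have hmem : y ∈ zeroSet f.1 ∩ zeroSet g.1 := ⟨h0, hyg⟩
      rw [hempty] at hmem
      exact hmem
    have hxg : g.1 x ≠ 0 := by
      intro h0
      have hmem : x ∈ zeroSet f.1 ∩ zeroSet g.1 := ⟨hxf, h0⟩
      rw [hempty] at hmem
      exact hmem
    obtain ⟨z, hzx, hzy⟩ := zg_exists_third X hX x y
    obtain ⟨ψ, hψx, hψy, hψz⟩ := zg_exists_psi X x y z hzx hzy
    set h1 : {f : C(X, ℝ) // (zeroSet f).Nonempty} := ⟨0, ⟨x, by simp [zeroSet]⟩⟩ with h1def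
    set h2 : {f : C(X, ℝ) // (zeroSet f).Nonempty} := ⟨ψ, ⟨x, hψx⟩⟩ with h2def
    have hz1 : (0 : C(X, ℝ)) z = 0 := rfl
    have h12 : h1 ≠ h2 := by
      intro e
      have := ContinuousMap.congr_fun (congrArg Subtype.val e) z
      rw [hψz] at this
      simp [h1def] at this
    have hne_f1 : f ≠ h1 := by
      intro e
      exact hyf (by rw [congrArg Subtype.val e]; rfl)
    have hne_1g : h1 ≠ g := by
      intro e
      exact hxg (by rw [← congrArg Subtype.val e]; rfl)
    have hne_g2 : g ≠ h2 := by
      intro e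
      exact hxg (by rw [congrArg Subtype.val e]; exact hψx)
    have hne_2f : h2 ≠ f := by
      intro e
      exact hyf (by rw [← congrArg Subtype.val e]; exact hψy)
    have adj_f1 : (zGraph X).Adj f h1 := ⟨hne_f1, ⟨x, hxf, by simp [zeroSet, h1def]⟩⟩
    have adj_1g : (zGraph X).Adj h1 g := ⟨hne_1g, ⟨y, by simp [zeroSet, h1def], hyg⟩⟩
    have adj_g2 : (zGraph X).Adj g h2 := ⟨hne_g2, ⟨y, hyg, hψy⟩⟩
    have adj_2f : (zGraph X).Adj h2 f := ⟨hne_2f, ⟨x, hψx, hxf⟩⟩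
    obtain ⟨c, hc, hgc, hclen⟩ := zg_square_cycle adj_f1 adj_1g adj_g2 adj_2f hfg h12
    rw [smallestCycleThrough]
    apply le_antisymm
    · apply le_trans (iInf_le _ c)
      apply le_trans (iInf_le _ hc)
      apply le_trans (iInf_le _ hgc)
      simp [hclen]
    · refine le_iInf fun w => le_iInf fun hw => le_iInf fun hm => ?_
      have h3 : 3 ≤ w.length := hw.three_le_length
      have hne3 : w.length ≠ 3 := by
        intro hlen
        have hadj := zg_length_three_adj hfg w hlen hm
        obtain ⟨p, hp⟩ := hadj.2
        exact absurd hp (by simp [hempty])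
      have : 4 ≤ w.length := by omega
      exact_mod_cast this
  have hdichot : (zeroSet f.1 ∩ zeroSet g.1).Nonempty ∨ zeroSet f.1 ∩ zeroSet g.1 = ∅ :=
    (zeroSet f.1 ∩ zeroSet g.1).eq_empty_or_nonempty.symm.imp id id
  constructor
  · constructor
    · intro h3
      rcases hdichot with h | h
      · exact h
      · rw [keyB h] at h3
        exact absurd h3 (by decide)
    · exact keyA
  · constructor
    · intro h4
      rcases hdichot with h | h
      · rw [keyA h] at h4
        exact absurd h4 (by decide)
      · exact h
    · exact keyB
end

section
/- For any space X with more than one point, the graph Γ(C(X)) is not complemented; that is, there exists a vertex f of Γ(C(X)) such that no vertex g satisfies f ⊥ g. -/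
open Set

/-- For X with more than one point, Γ(C(X)) is not complemented: there is a vertex f
such that no vertex g is orthogonal to f (i.e. adjacent to f with no common neighbour). -/
theorem zGraph_not_complemented
    (X : Type*) [TopologicalSpace X] [T2Space X] [CompletelyRegularSpace X] [Nontrivial X] :
    ∃ f : {f : C(X, ℝ) // (zeroSet f).Nonempty},
      ∀ g : {f : C(X, ℝ) // (zeroSet f).Nonempty},
        ¬((zGraph X).Adj f g ∧
          ∀ h, ¬((zGraph X).Adj h f ∧ (zGraph X).Adj h g)) := by
  classical
  obtain ⟨x₀, -⟩ := exists_pair_ne X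
  refine ⟨⟨0, ⟨x₀, rfl⟩⟩, ?_⟩
  rintro g ⟨⟨hne, -⟩, hforall⟩
  -- pick a point in Z(g)
  obtain ⟨x, hx⟩ := g.2
  obtain ⟨y, hy⟩ := exists_ne x
  -- get a continuous function vanishing at x and equal to 1 at y
  obtain ⟨k, hkc, hkx, hky⟩ :=
    CompletelyRegularSpace.completely_regular x {y} isClosed_singleton
      (by simpa using hy.symm)
  set K : C(X, ℝ) := ⟨fun z => (k z : ℝ), continuous_subtype_val.comp hkc⟩ with hK
  have hKx : K x = 0 := by simp [hK, hkx]
  have hKy : K y = 1 := by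
    have : k y = 1 := hky rfl
    simp [hK, this]
  -- choose h = K or 2 • K, whichever differs from g
  have hzero : ∀ (c : ℝ), c ≠ 0 → c • K ≠ (0 : C(X, ℝ)) := by
    intro c hc h0
    have := congrArg (fun f : C(X, ℝ) => f y) h0
    simp [hKy, hc] at this
  have hmem : ∀ (c : ℝ), x ∈ zeroSet (c • K) := by
    intro c; simp [zeroSet, hKx]
  have key : ∀ (c : ℝ), c ≠ 0 → c • K ≠ g.1 → False := by
    intro c hc hcg
    refine hforall ⟨c • K, x, hmem c⟩ ⟨⟨?_, ⟨x, hmem c, rfl⟩⟩, ⟨?_, ⟨x, hmem c, hx⟩⟩⟩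
    · exact fun h => hzero c hc (congrArg Subtype.val h)
    · exact fun h => hcg (congrArg Subtype.val h)
  by_cases h1 : (1 : ℝ) • K = g.1
  · refine key 2 (by norm_num) ?_
    intro h2
    have : (2 : ℝ) * K y = (1 : ℝ) * K y := by
      have e1 := congrArg (fun f : C(X, ℝ) => f y) h1
      have e2 := congrArg (fun f : C(X, ℝ) => f y) h2
      simp only [ContinuousMap.smul_apply, smul_eq_mul] at e1 e2
      exact e2.trans e1.symm
    rw [hKy] at this; norm_num at this
  · exact key 1 one_ne_zero h1
end

section
/- Let X have more than one point. For any vertices f, g of Γ(C(X)), the set {f, g} is a dominating set of Γ(C(X)) if and only if Z(f) ∪ Z(g) = X. -/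
open Set

/-- For X with more than one point and vertices f, g of Γ(C(X)), the set {f, g}
dominates Γ(C(X)) iff Z(f) ∪ Z(g) = X. -/
theorem zGraph_pair_dominates_iff
    (X : Type*) [TopologicalSpace X] [T2Space X] [CompletelyRegularSpace X] [Nontrivial X]
    (f g : {f : C(X, ℝ) // (zeroSet f).Nonempty}) :
    (∀ v ∉ ({f, g} : Set {f : C(X, ℝ) // (zeroSet f).Nonempty}),
      ∃ a ∈ ({f, g} : Set {f : C(X, ℝ) // (zeroSet f).Nonempty}), (zGraph X).Adj v a) ↔
    zeroSet f.1 ∪ zeroSet g.1 = Set.univ := by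
  constructor
  · intro hdom
    by_contra hne
    obtain ⟨x, hx⟩ : ∃ x, x ∉ zeroSet f.1 ∪ zeroSet g.1 := by
      by_contra h
      push_neg at h
      exact hne (Set.eq_univ_of_forall h)
    have hclosed : IsClosed (zeroSet f.1 ∪ zeroSet g.1) := by
      refine IsClosed.union ?_ ?_ <;>
        exact isClosed_eq (by continuity) continuous_const
    obtain ⟨h, hc, hx0, hK⟩ :=
      CompletelyRegularSpace.completely_regular x _ hclosed hx
    set h' : C(X, ℝ) := ⟨fun y => (h y : ℝ), by continuity⟩ with hh'
    have hz : zeroSet h' = {y | (h y : ℝ) = 0} := rfl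
    have hxz : x ∈ zeroSet h' := by
      simp [zeroSet, hh', hx0]
    have hdisj : ∀ y ∈ zeroSet f.1 ∪ zeroSet g.1, y ∉ zeroSet h' := by
      intro y hy hyz
      have h1 : h y = 1 := hK hy
      have h1' : (h y : ℝ) = 1 := by exact_mod_cast congrArg Subtype.val h1
      simp only [zeroSet, hh', ContinuousMap.coe_mk, Set.mem_setOf_eq, h1'] at hyz
      norm_num at hyz
    set v : {f : C(X, ℝ) // (zeroSet f).Nonempty} := ⟨h', ⟨x, hxz⟩⟩ with hv
    have hvf : v ≠ f := by
      intro he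
      obtain ⟨y, hy⟩ := f.2
      exact hdisj y (Or.inl hy) (by rw [← he] at hy; exact hy)
    have hvg : v ≠ g := by
      intro he
      obtain ⟨y, hy⟩ := g.2
      exact hdisj y (Or.inr hy) (by rw [← he] at hy; exact hy)
    obtain ⟨a, ha, hadj⟩ := hdom v (by simp [hvf, hvg])
    obtain ⟨y, hy1, hy2⟩ := hadj.2
    rcases ha with rfl | rfl
    · exact hdisj y (Or.inl hy2) hy1
    · exact hdisj y (Or.inr hy2) hy1
  · intro huniv v hv
    obtain ⟨x, hx⟩ := v.2
    have : x ∈ zeroSet f.1 ∪ zeroSet g.1 := huniv ▸ Set.mem_univ x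
    simp only [Set.mem_insert_iff, Set.mem_singleton_iff, not_or] at hv
    rcases this with h | h
    · exact ⟨f, Or.inl rfl, hv.1, ⟨x, hx, h⟩⟩
    · exact ⟨g, Or.inr rfl, hv.2, ⟨x, hx, h⟩⟩
end

section
/- For any space X with more than one point, the line graph L(Γ(C(X))) is both triangulated and hypertriangulated, i.e., every vertex of L(Γ(C(X))) lies on a cycle of length 3 and every edge of L(Γ(C(X))) lies on a cycle of length 3. -/
open Set

lemma exists_vertex (X : Type*) [TopologicalSpace X] [T2Space X] [CompletelyRegularSpace X]
    [Nontrivial X] (x : X) (a b c d : C(X, ℝ)) :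
    ∃ k : C(X, ℝ), k ≠ a ∧ k ≠ b ∧ k ≠ c ∧ k ≠ d ∧ x ∈ zeroSet k := by
  obtain ⟨y, hy⟩ := exists_ne x
  obtain ⟨f, hf, hfx, hfy⟩ := CompletelyRegularSpace.completely_regular x {y}
    isClosed_singleton (by simpa using hy.symm)
  set f0 : C(X, ℝ) := ⟨fun z => (f z : ℝ), by continuity⟩ with hf0
  have hinj : Function.Injective (fun r : ℝ => r • f0) := by
    intro r s h
    have := congrArg (fun g : C(X, ℝ) => g y) h
    simp [f0, hfy (mem_singleton y)] at this
    simpa using this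
  have hfin : ({a, b, c, d} : Set C(X, ℝ)).Finite := Set.toFinite _
  obtain ⟨k, hk1, hk2⟩ := ((Set.infinite_range_of_injective hinj).diff hfin).nonempty
  simp only [Set.mem_range] at hk1
  obtain ⟨r, rfl⟩ := hk1
  simp only [Set.mem_insert_iff, Set.mem_singleton_iff, not_or] at hk2
  refine ⟨r • f0, hk2.1, hk2.2.1, hk2.2.2.1, hk2.2.2.2, ?_⟩
  show (r • f0) x = 0
  simp [f0, hfx]

lemma edge_rep {V : Type*} {G : SimpleGraph V} (e : G.edgeSet) :
    ∃ a b, G.Adj a b ∧ (e : Sym2 V) = s(a, b) := by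
  obtain ⟨⟨a, b⟩, hab⟩ := Quot.exists_rep (e : Sym2 V)
  refine ⟨a, b, ?_, hab.symm⟩
  have := e.2
  rw [← hab] at this
  exact this

/-- For X with more than one point, the line graph of Γ(C(X)) is triangulated and
hypertriangulated. -/
theorem lineGraph_triangulated_and_hypertriangulated
    (X : Type*) [TopologicalSpace X] [T2Space X] [CompletelyRegularSpace X] [Nontrivial X] :
    (∀ e : (zGraph X).edgeSet,
      ∃ e₁ e₂, (zGraph X).lineGraph.Adj e e₁ ∧ (zGraph X).lineGraph.Adj e₁ e₂ ∧
        (zGraph X).lineGraph.Adj e₂ e) ∧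
    (∀ e₁ e₂ : (zGraph X).edgeSet, (zGraph X).lineGraph.Adj e₁ e₂ →
      ∃ e₃, (zGraph X).lineGraph.Adj e₁ e₃ ∧ (zGraph X).lineGraph.Adj e₂ e₃) := by
  constructor
  · intro e
    obtain ⟨a, b, ⟨hab, x, hxa, hxb⟩, hrep⟩ := edge_rep e
    obtain ⟨k, hka, hkb, -, -, hkx⟩ := exists_vertex X x a.1 b.1 a.1 b.1
    set kv : {f : C(X, ℝ) // (zeroSet f).Nonempty} := ⟨k, x, hkx⟩ with hkv
    have hkva : kv ≠ a := fun h => hka (congrArg Subtype.val h)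
    have hkvb : kv ≠ b := fun h => hkb (congrArg Subtype.val h)
    have h1 : (zGraph X).Adj b kv := ⟨Ne.symm hkvb, x, hxb, hkx⟩
    have h2 : (zGraph X).Adj kv a := ⟨hkva, x, hkx, hxa⟩
    refine ⟨⟨s(b, kv), h1⟩, ⟨s(kv, a), h2⟩, ?_, ?_, ?_⟩
    · rw [SimpleGraph.lineGraph_adj_iff_exists]
      refine ⟨?_, b, by simp [hrep], by simp⟩
      intro h
      have := congrArg (Subtype.val) h
      simp only [hrep] at this
      rw [Sym2.eq_iff] at this
      rcases this with ⟨h1, h2⟩ | ⟨h1, h2⟩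
      · exact hab h1
      · exact hkva h1.symm
    · rw [SimpleGraph.lineGraph_adj_iff_exists]
      refine ⟨?_, kv, by simp, by simp⟩
      intro h
      have := congrArg (Subtype.val) h
      rw [Sym2.eq_iff] at this
      rcases this with ⟨h1, h2⟩ | ⟨h1, h2⟩
      · exact hkvb h1.symm
      · exact hab h1.symm
    · rw [SimpleGraph.lineGraph_adj_iff_exists]
      refine ⟨?_, a, by simp, by simp [hrep]⟩
      intro h
      have := congrArg (Subtype.val) h
      simp only [hrep] at this
      rw [Sym2.eq_iff] at this
      rcases this with ⟨h1, h2⟩ | ⟨h1, h2⟩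
      · exact hkva h1
      · exact hkvb h1
  · intro e₁ e₂ hadj
    rw [SimpleGraph.lineGraph_adj_iff_exists] at hadj
    obtain ⟨hne, v, hv1, hv2⟩ := hadj
    obtain ⟨a, b, hab, hrep1⟩ := edge_rep e₁
    obtain ⟨c, d, hcd, hrep2⟩ := edge_rep e₂
    obtain ⟨x, hxv⟩ := v.2
    obtain ⟨k, hka, hkb, hkc, hkd, hkx⟩ := exists_vertex X x a.1 b.1 c.1 d.1
    set kv : {f : C(X, ℝ) // (zeroSet f).Nonempty} := ⟨k, x, hkx⟩ with hkv
    have hkva : kv ≠ a := fun h => hka (congrArg Subtype.val h)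
    have hkvb : kv ≠ b := fun h => hkb (congrArg Subtype.val h)
    have hkvc : kv ≠ c := fun h => hkc (congrArg Subtype.val h)
    have hkvd : kv ≠ d := fun h => hkd (congrArg Subtype.val h)
    have hkvv : kv ≠ v := by
      rw [hrep1, Sym2.mem_iff] at hv1
      rcases hv1 with rfl | rfl
      · exact hkva
      · exact hkvb
    have h3 : (zGraph X).Adj v kv := ⟨hkvv.symm, x, hxv, hkx⟩
    refine ⟨⟨s(v, kv), h3⟩, ?_, ?_⟩
    · rw [SimpleGraph.lineGraph_adj_iff_exists]
      refine ⟨?_, v, hv1, by simp⟩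
      intro h
      have := congrArg (Subtype.val) h
      simp only [hrep1] at this
      rw [Sym2.eq_iff] at this
      rcases this with ⟨h1, h2⟩ | ⟨h1, h2⟩
      · exact hkvb h2.symm
      · exact hkva h1.symm
    · rw [SimpleGraph.lineGraph_adj_iff_exists]
      refine ⟨?_, v, hv2, by simp⟩
      intro h
      have := congrArg (Subtype.val) h
      simp only [hrep2] at this
      rw [Sym2.eq_iff] at this
      rcases this with ⟨h1, h2⟩ | ⟨h1, h2⟩
      · exact hkvd h2.symm
      · exact hkvc h1.symm
end

section
/- Let X have more than two points and let [f₁,f₂] and [g₁,g₂] be distinct vertices of L(Γ(C(X))). Denote by c(u,v) the length of a smallest cycle of L(Γ(C(X))) containing both u and v. Then: (1) c([f₁,f₂],[g₁,g₂]) = 3 if and only if f_i = g_j for some i, j ∈ {1,2}; (2) c([f₁,f₂],[g₁,g₂]) = 4 if and only if f_i ≠ g_j for all i, j ∈ {1,2} and either there is some i ∈ {1,2} with Z(f_i) ∩ Z(g_j) ≠ ∅ for all j ∈ {1,2}, or there exist i, j ∈ {1,2} with Z(f₁) ∩ Z(g_i) ≠ ∅ and Z(f₂) ∩ Z(g_j)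 ≠ ∅; (3) c([f₁,f₂],[g₁,g₂]) = 5 if and only if f_i ≠ g_j for all i, j ∈ {1,2} and Z(f_i) ∩ Z(g_j) ≠ ∅ for exactly one pair (i,j) ∈ {1,2}×{1,2}; (4) c([f₁,f₂],[g₁,g₂]) = 6 if and only if f_i ≠ g_j for all i, j ∈ {1,2} and Z(f_i) ∩ Z(g_j) = ∅ for all i, j ∈ {1,2}. -/
open Set

/-! ### General graph lemmas -/

namespace ZSCAux

open SimpleGraph Walk

variable {V : Type*} {G : SimpleGraph V}

lemma walk_len1 {u v : V} (p : G.Walk u v) (h : p.length = 1) :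
    ∃ (h1 : G.Adj u v), p = Walk.cons h1 Walk.nil := by
  cases p with
  | nil => simp at h
  | cons h1 q =>
    cases q with
    | nil => exact ⟨h1, rfl⟩
    | cons h2 r => simp [Walk.length_cons] at h

lemma walk_len2 {u v : V} (p : G.Walk u v) (h : p.length = 2) :
    ∃ (a : V) (h1 : G.Adj u a) (h2 : G.Adj a v), p = Walk.cons h1 (Walk.cons h2 Walk.nil) := by
  cases p with
  | nil => simp at h
  | cons h1 q =>
    cases q with
    | nil => simp at h
    | cons h2 r =>
      cases r with
      | nil => exact ⟨_, h1, h2, rfl⟩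
      | cons h3 s => simp [Walk.length_cons] at h

lemma cycle_split {u v : V} (huv : u ≠ v) (w : G.Walk u u) (hm : v ∈ w.support) :
    ∃ (p : G.Walk u v) (q : G.Walk v u), p.append q = w ∧ 1 ≤ p.length ∧ 1 ≤ q.length ∧
      p.length + q.length = w.length := by
  classical
  refine ⟨w.takeUntil v hm, w.dropUntil v hm, w.take_spec hm, ?_, ?_, ?_⟩
  · rcases Nat.eq_zero_or_pos (w.takeUntil v hm).length with h | h
    · exact absurd (Walk.eq_of_length_eq_zero h) huv
    · exact h
  · rcases Nat.eq_zero_or_pos (w.dropUntil v hm).length with h | h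
    · exact absurd (Walk.eq_of_length_eq_zero h) huv.symm
    · exact h
  · conv_rhs => rw [← w.take_spec hm]
    rw [Walk.length_append]

lemma reach2_of_short_cycle {u v : V} (huv : u ≠ v) (w : G.Walk u u)
    (hm : v ∈ w.support) (hl : w.length ≤ 5) :
    G.Adj u v ∨ ∃ a, G.Adj u a ∧ G.Adj a v := by
  obtain ⟨p, q, hpq, hp1, hq1, hsum⟩ := cycle_split huv w hm
  have hmin : p.length = 1 ∨ p.length = 2 ∨ q.length = 1 ∨ q.length = 2 := by omega
  rcases hmin with h | h | h | h
  · obtain ⟨h1, -⟩ := walk_len1 p h; exact Or.inl h1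
  · obtain ⟨a, h1, h2, -⟩ := walk_len2 p h; exact Or.inr ⟨a, h1, h2⟩
  · obtain ⟨h1, -⟩ := walk_len1 q h; exact Or.inl h1.symm
  · obtain ⟨a, h1, h2, -⟩ := walk_len2 q h; exact Or.inr ⟨a, h2.symm, h1.symm⟩

lemma adj_of_cycle3 {u v : V} (huv : u ≠ v) (w : G.Walk u u)
    (hm : v ∈ w.support) (hl : w.length = 3) : G.Adj u v := by
  obtain ⟨p, q, hpq, hp1, hq1, hsum⟩ := cycle_split huv w hm
  have : p.length = 1 ∨ q.length = 1 := by omega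
  rcases this with h | h
  · obtain ⟨h1, -⟩ := walk_len1 p h; exact h1
  · obtain ⟨h1, -⟩ := walk_len1 q h; exact h1.symm

lemma cycle4_struct {u v : V} (huv : u ≠ v) (w : G.Walk u u) (hc : w.IsCycle)
    (hm : v ∈ w.support) (hl : w.length = 4) :
    G.Adj u v ∨ ∃ a b, a ≠ b ∧ G.Adj u a ∧ G.Adj a v ∧ G.Adj u b ∧ G.Adj b v := by
  obtain ⟨p, q, hpq, hp1, hq1, hsum⟩ := cycle_split huv w hm
  have : p.length = 1 ∨ q.length = 1 ∨ (p.length = 2 ∧ q.length = 2) := by omega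
  rcases this with h | h | ⟨h, h'⟩
  · obtain ⟨h1, -⟩ := walk_len1 p h; exact Or.inl h1
  · obtain ⟨h1, -⟩ := walk_len1 q h; exact Or.inl h1.symm
  · obtain ⟨a, h1, h2, hp⟩ := walk_len2 p h
    obtain ⟨b, h3, h4, hq⟩ := walk_len2 q h'
    refine Or.inr ⟨a, b, ?_, h1, h2, h4.symm, h3.symm⟩
    have hnd := hc.support_nodup
    rw [← hpq, hp, hq] at hnd
    simp [Walk.support_append] at hnd
    tauto

lemma isCycle3 {u a b : V} (h1 : G.Adj u a) (h2 : G.Adj a b) (h3 : G.Adj b u) :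
    (Walk.cons h1 (Walk.cons h2 (Walk.cons h3 Walk.nil))).IsCycle := by
  have := h1.ne; have := h2.ne; have := h3.ne
  simp_all [Walk.isCycle_def, Walk.isTrail_def, Sym2.eq_iff, ne_comm]

lemma isCycle4 {u a v b : V} (h1 : G.Adj u a) (h2 : G.Adj a v) (h3 : G.Adj v b)
    (h4 : G.Adj b u) (hab : a ≠ b) (huv : u ≠ v) :
    (Walk.cons h1 (Walk.cons h2 (Walk.cons h3 (Walk.cons h4 Walk.nil)))).IsCycle := by
  have := h1.ne; have := h2.ne; have := h3.ne; have := h4.ne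
  simp_all [Walk.isCycle_def, Walk.isTrail_def, Sym2.eq_iff, ne_comm]

lemma isCycle5 {u a v b c : V} (h1 : G.Adj u a) (h2 : G.Adj a v) (h3 : G.Adj v b)
    (h4 : G.Adj b c) (h5 : G.Adj c u)
    (huv : u ≠ v) (hub : u ≠ b) (hab : a ≠ b) (hac : a ≠ c) (hvc : v ≠ c) :
    (Walk.cons h1 (Walk.cons h2 (Walk.cons h3 (Walk.cons h4
      (Walk.cons h5 Walk.nil))))).IsCycle := by
  have := h1.ne; have := h2.ne; have := h3.ne; have := h4.ne; have := h5.ne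
  simp_all [Walk.isCycle_def, Walk.isTrail_def, Sym2.eq_iff, ne_comm]

lemma isCycle6 {u a b v c d : V} (h1 : G.Adj u a) (h2 : G.Adj a b) (h3 : G.Adj b v)
    (h4 : G.Adj v c) (h5 : G.Adj c d) (h6 : G.Adj d u)
    (hub : u ≠ b) (huv : u ≠ v) (huc : u ≠ c) (hav : a ≠ v) (hac : a ≠ c) (had : a ≠ d)
    (hbc : b ≠ c) (hbd : b ≠ d) (hvd : v ≠ d) :
    (Walk.cons h1 (Walk.cons h2 (Walk.cons h3 (Walk.cons h4 (Walk.cons h5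
      (Walk.cons h6 Walk.nil)))))).IsCycle := by
  have := h1.ne; have := h2.ne; have := h3.ne; have := h4.ne; have := h5.ne; have := h6.ne
  simp_all [Walk.isCycle_def, Walk.isTrail_def, Sym2.eq_iff, ne_comm]

lemma scyc_le_length {u v : V} (w : G.Walk u u) (hc : w.IsCycle) (hm : v ∈ w.support) :
    smallestCycleThrough G u v ≤ w.length :=
  iInf_le_of_le w (iInf_le_of_le hc (iInf_le_of_le hm le_rfl))

lemma le_scyc {u v : V} {n : ℕ}
    (h : ∀ w : G.Walk u u, w.IsCycle → v ∈ w.support → n ≤ w.length) :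
    (n : ℕ∞) ≤ smallestCycleThrough G u v :=
  le_iInf fun w => le_iInf fun hc => le_iInf fun hm => by exact_mod_cast h w hc hm

lemma scyc_eq {u v : V} {n : ℕ} (w : G.Walk u u) (hc : w.IsCycle) (hm : v ∈ w.support)
    (hlen : w.length = n)
    (h : ∀ w : G.Walk u u, w.IsCycle → v ∈ w.support → n ≤ w.length) :
    smallestCycleThrough G u v = (n : ℕ∞) := by
  refine le_antisymm ?_ (le_scyc h)
  have := scyc_le_length w hc hm
  rwa [hlen] at this

lemma uniq_of (P : Fin 2 → Fin 2 → Prop) (i j : Fin 2) (hij : P i j)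
    (h : ∀ i' j', P i' j' → i' = i ∧ j' = j) : ∃! p : Fin 2 × Fin 2, P p.1 p.2 :=
  ⟨(i, j), hij, fun q hq => by
    obtain ⟨a, b⟩ := q
    obtain ⟨h1, h2⟩ := h a b hq
    simp [h1, h2]⟩

lemma cover_cases (P : Fin 2 → Fin 2 → Prop) :
    ((∃ i, ∀ j, P i j) ∨ (∃ i j, P 0 i ∧ P 1 j)) ∨
      (∃! p : Fin 2 × Fin 2, P p.1 p.2) ∨ (∀ i j, ¬ P i j) := by
  by_cases h00 : P 0 0 <;> by_cases h01 : P 0 1 <;> by_cases h10 : P 1 0 <;>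
    by_cases h11 : P 1 1
  · exact Or.inl (Or.inl ⟨0, Fin.forall_fin_two.mpr ⟨h00, h01⟩⟩)
  · exact Or.inl (Or.inl ⟨0, Fin.forall_fin_two.mpr ⟨h00, h01⟩⟩)
  · exact Or.inl (Or.inl ⟨0, Fin.forall_fin_two.mpr ⟨h00, h01⟩⟩)
  · exact Or.inl (Or.inl ⟨0, Fin.forall_fin_two.mpr ⟨h00, h01⟩⟩)
  · exact Or.inl (Or.inr ⟨0, 0, h00, h10⟩)
  · exact Or.inl (Or.inr ⟨0, 0, h00, h10⟩)
  · exact Or.inl (Or.inr ⟨0, 1, h00, h11⟩)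
  · refine Or.inr (Or.inl (uniq_of P 0 0 h00 ?_))
    intro i' j' h'
    fin_cases i' <;> fin_cases j' <;> simp_all
  · exact Or.inl (Or.inr ⟨1, 0, h01, h10⟩)
  · exact Or.inl (Or.inr ⟨1, 0, h01, h10⟩)
  · exact Or.inl (Or.inr ⟨1, 1, h01, h11⟩)
  · refine Or.inr (Or.inl (uniq_of P 0 1 h01 ?_))
    intro i' j' h'
    fin_cases i' <;> fin_cases j' <;> simp_all
  · exact Or.inl (Or.inl ⟨1, Fin.forall_fin_two.mpr ⟨h10, h11⟩⟩)
  · refine Or.inr (Or.inl (uniq_of P 1 0 h10 ?_))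
    intro i' j' h'
    fin_cases i' <;> fin_cases j' <;> simp_all
  · refine Or.inr (Or.inl (uniq_of P 1 1 h11 ?_))
    intro i' j' h'
    fin_cases i' <;> fin_cases j' <;> simp_all
  · refine Or.inr (Or.inr ?_)
    intro i j
    fin_cases i <;> fin_cases j <;> simp_all

lemma fin2_mem {α : Type*} (f : Fin 2 → α) (i : Fin 2) : f i ∈ s(f 0, f 1) := by
  fin_cases i <;> simp

lemma fin2_ne {α : Type*} {f : Fin 2 → α} (h01 : f 0 ≠ f 1) {i j : Fin 2} (h : i ≠ j) :
    f i ≠ f j := by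
  fin_cases i <;> fin_cases j <;> first | exact fun hh => h01 hh.symm | simp_all

lemma fin2_inj {α : Type*} {f : Fin 2 → α} (h01 : f 0 ≠ f 1) {i j : Fin 2}
    (h : f i = f j) : i = j := by
  by_contra hij
  exact fin2_ne h01 hij h

lemma fin2_cases {α : Type*} {f : Fin 2 → α} {x : α} (h : x ∈ s(f 0, f 1)) :
    ∃ i, x = f i := by
  rw [Sym2.mem_iff] at h
  rcases h with h | h
  · exact ⟨0, h⟩
  · exact ⟨1, h⟩

end ZSCAux

section Part2
set_option linter.unusedSectionVars false
namespace ZSCAux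

open SimpleGraph Walk Set

variable {X : Type*} [TopologicalSpace X] [T2Space X] [CompletelyRegularSpace X]

lemma sym2_ne_of {α : Type*} {a b c d : α} (h1 : a = c → b = d → False)
    (h2 : a = d → b = c → False) : s(a, b) ≠ s(c, d) := by
  rw [Ne, Sym2.eq_iff]
  rintro (⟨x, y⟩ | ⟨x, y⟩)
  · exact h1 x y
  · exact h2 x y

lemma edge_ne_of {a b c d : {f : C(X, ℝ) // (zeroSet f).Nonempty}}
    {pa : s(a, b) ∈ (zGraph X).edgeSet} {pb : s(c, d) ∈ (zGraph X).edgeSet}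
    (h1 : a = c → b = d → False) (h2 : a = d → b = c → False) :
    (⟨s(a, b), pa⟩ : (zGraph X).edgeSet) ≠ ⟨s(c, d), pb⟩ :=
  fun he => sym2_ne_of h1 h2 (congrArg Subtype.val he)

lemma exists_sep (x y : X) (hxy : x ≠ y) : ∃ k : C(X, ℝ), k x = 0 ∧ k y = 1 := by
  obtain ⟨f, cf, hfx, hfy⟩ := CompletelyRegularSpace.completely_regular x {y}
    isClosed_singleton (by simpa using hxy)
  refine ⟨⟨fun z => (f z : ℝ), continuous_subtype_val.comp cf⟩, ?_, ?_⟩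
  · simp [hfx]
  · have : f y = 1 := hfy rfl
    simp [this]

lemma pick_avoid (x y : X) (hxy : x ≠ y)
    (e₁ e₂ e₃ : {f : C(X, ℝ) // (zeroSet f).Nonempty}) :
    ∃ h : {f : C(X, ℝ) // (zeroSet f).Nonempty},
      x ∈ zeroSet h.1 ∧ h ≠ e₁ ∧ h ≠ e₂ ∧ h ≠ e₃ := by
  classical
  obtain ⟨k, hkx, hky⟩ := exists_sep x y hxy
  set m : Fin 4 → {f : C(X, ℝ) // (zeroSet f).Nonempty} := fun i =>
    ⟨(((i : ℕ) + 1 : ℝ)) • k, ⟨x, by simp [zeroSet, hkx]⟩⟩ with hm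
  have hinj : Function.Injective m := by
    intro i j hij
    have := congrArg (fun v => v.1 y) hij
    simp [hm, hky] at this
    exact Fin.ext (by exact_mod_cast this)
  by_contra hcon
  push_neg at hcon
  have hmap : ∀ i : Fin 4, m i ∈ ({e₁, e₂, e₃} : Finset _) := by
    intro i
    have hx : x ∈ zeroSet (m i).1 := by simp [hm, zeroSet, hkx]
    have := hcon (m i) hx
    simp only [Finset.mem_insert, Finset.mem_singleton]
    tauto
  have hcard : ({e₁, e₂, e₃} : Finset _).card < (Finset.univ : Finset (Fin 4)).card := by
    have h3 : ({e₁, e₂, e₃} : Finset _).card ≤ 3 := by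
      apply le_trans (Finset.card_insert_le _ _)
      apply Nat.succ_le_succ
      apply le_trans (Finset.card_insert_le _ _)
      simp
    simp only [Finset.card_univ, Fintype.card_fin]
    omega
  obtain ⟨i, -, j, -, hij, heq⟩ :=
    Finset.exists_ne_map_eq_of_card_lt_of_maps_to hcard (fun i _ => hmap i)
  exact hij (hinj heq)

lemma lAdj {e₁ e₂ : (zGraph X).edgeSet}
    (h : (e₁ : Sym2 {f : C(X, ℝ) // (zeroSet f).Nonempty}) ≠
      (e₂ : Sym2 {f : C(X, ℝ) // (zeroSet f).Nonempty}))
    {c : {f : C(X, ℝ) // (zeroSet f).Nonempty}}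
    (h1 : c ∈ (e₁ : Sym2 {f : C(X, ℝ) // (zeroSet f).Nonempty}))
    (h2 : c ∈ (e₂ : Sym2 {f : C(X, ℝ) // (zeroSet f).Nonempty})) :
    (zGraph X).lineGraph.Adj e₁ e₂ :=
  SimpleGraph.lineGraph_adj_iff_exists.mpr ⟨Subtype.coe_ne_coe.mp h, c, h1, h2⟩

lemma not_adj (f g : Fin 2 → {f : C(X, ℝ) // (zeroSet f).Nonempty})
    (hfg : ∀ i j, f i ≠ g j)
    (hu : s(f 0, f 1) ∈ (zGraph X).edgeSet) (hv : s(g 0, g 1) ∈ (zGraph X).edgeSet) :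
    ¬ (zGraph X).lineGraph.Adj ⟨s(f 0, f 1), hu⟩ ⟨s(g 0, g 1), hv⟩ := by
  rw [SimpleGraph.lineGraph_adj_iff_exists]
  rintro ⟨-, x, hx1, hx2⟩
  obtain ⟨i, rfl⟩ := fin2_cases hx1
  obtain ⟨j, hj⟩ := fin2_cases hx2
  exact hfg i j hj

lemma common_char (f g : Fin 2 → {f : C(X, ℝ) // (zeroSet f).Nonempty})
    (hfg : ∀ i j, f i ≠ g j)
    (hu : s(f 0, f 1) ∈ (zGraph X).edgeSet) (hv : s(g 0, g 1) ∈ (zGraph X).edgeSet)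
    (e : (zGraph X).edgeSet)
    (h1 : (zGraph X).lineGraph.Adj ⟨s(f 0, f 1), hu⟩ e)
    (h2 : (zGraph X).lineGraph.Adj e ⟨s(g 0, g 1), hv⟩) :
    ∃ i j, (e : Sym2 _) = s(f i, g j) ∧ (zeroSet (f i).1 ∩ zeroSet (g j).1).Nonempty := by
  rw [SimpleGraph.lineGraph_adj_iff_exists] at h1 h2
  obtain ⟨-, x, hx1, hx2⟩ := h1
  obtain ⟨-, y, hy1, hy2⟩ := h2
  obtain ⟨i, rfl⟩ := fin2_cases hx1
  obtain ⟨j, rfl⟩ := fin2_cases hy2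
  have he : (e : Sym2 _) = s(f i, g j) := (Sym2.mem_and_mem_iff (hfg i j)).mp ⟨hx2, hy1⟩
  have hmem : s(f i, g j) ∈ (zGraph X).edgeSet := he ▸ e.2
  have hadj : (zGraph X).Adj (f i) (g j) := (zGraph X).mem_edgeSet.mp hmem
  exact ⟨i, j, he, hadj.2⟩

end ZSCAux
end Part2

section Part3
set_option linter.unusedSectionVars false
namespace ZSCAux

open SimpleGraph Walk Set

variable {X : Type*} [TopologicalSpace X] [T2Space X] [CompletelyRegularSpace X]

lemma caseA (hX : ∃ p q r : X, p ≠ q ∧ p ≠ r ∧ q ≠ r)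
    (f g : Fin 2 → {f : C(X, ℝ) // (zeroSet f).Nonempty})
    (hu : s(f 0, f 1) ∈ (zGraph X).edgeSet) (hv : s(g 0, g 1) ∈ (zGraph X).edgeSet)
    (a b c : {f : C(X, ℝ) // (zeroSet f).Nonempty})
    (hua : s(f 0, f 1) = s(a, b)) (hva : s(g 0, g 1) = s(a, c)) (hbc : b ≠ c) :
    smallestCycleThrough (zGraph X).lineGraph ⟨s(f 0, f 1), hu⟩ ⟨s(g 0, g 1), hv⟩ = 3 := by
  have hab : (zGraph X).Adj a b := (zGraph X).mem_edgeSet.mp (hua ▸ hu)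
  have hac : (zGraph X).Adj a c := (zGraph X).mem_edgeSet.mp (hva ▸ hv)
  obtain ⟨x, hxa⟩ := a.2
  have hy : ∃ y : X, y ≠ x := by
    obtain ⟨p, q, r, hpq, hpr, hqr⟩ := hX
    by_cases hpx : p = x
    · exact ⟨q, fun h => hpq (hpx.trans h.symm)⟩
    · exact ⟨p, hpx⟩
  obtain ⟨y, hyx⟩ := hy
  obtain ⟨h, hxh, hha, hhb, hhc⟩ := pick_avoid x y hyx.symm a b c
  have hzadj : (zGraph X).Adj a h := ⟨hha.symm, ⟨x, hxa, hxh⟩⟩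
  have hw : s(a, h) ∈ (zGraph X).edgeSet := (zGraph X).mem_edgeSet.mpr hzadj
  have A1 : (zGraph X).lineGraph.Adj ⟨s(f 0, f 1), hu⟩ ⟨s(g 0, g 1), hv⟩ := by
    refine lAdj ?_ (c := a) ?_ ?_
    · show s(f 0, f 1) ≠ s(g 0, g 1)
      rw [hua, hva]
      exact sym2_ne_of (fun _ hh => hbc hh) (fun h1 h2 => hbc (h2.trans h1))
    · show a ∈ s(f 0, f 1); rw [hua]; simp
    · show a ∈ s(g 0, g 1); rw [hva]; simp
  have A2 : (zGraph X).lineGraph.Adj ⟨s(g 0, g 1), hv⟩ ⟨s(a, h), hw⟩ := by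
    refine lAdj ?_ (c := a) ?_ ?_
    · show s(g 0, g 1) ≠ s(a, h)
      rw [hva]
      exact sym2_ne_of (fun _ hh => hhc hh.symm) (fun h1 h2 => hha h1.symm)
    · show a ∈ s(g 0, g 1); rw [hva]; simp
    · show a ∈ s(a, h); simp
  have A3 : (zGraph X).lineGraph.Adj ⟨s(a, h), hw⟩ ⟨s(f 0, f 1), hu⟩ := by
    refine lAdj ?_ (c := a) ?_ ?_
    · show s(a, h) ≠ s(f 0, f 1)
      rw [hua]
      exact sym2_ne_of (fun _ hh => hhb hh) (fun _ h2 => hha h2)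
    · show a ∈ s(a, h); simp
    · show a ∈ s(f 0, f 1); rw [hua]; simp
  refine scyc_eq (n := 3) (Walk.cons A1 (Walk.cons A2 (Walk.cons A3 Walk.nil)))
    (isCycle3 A1 A2 A3) (by simp) rfl ?_
  intro w hc hm
  exact hc.three_le_length

lemma caseB (f g : Fin 2 → {f : C(X, ℝ) // (zeroSet f).Nonempty})
    (hu : s(f 0, f 1) ∈ (zGraph X).edgeSet) (hv : s(g 0, g 1) ∈ (zGraph X).edgeSet)
    (hne : s(f 0, f 1) ≠ s(g 0, g 1)) (hfg : ∀ i j, f i ≠ g j)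
    (i1 j1 i2 j2 : Fin 2) (hp : (i1, j1) ≠ (i2, j2))
    (h1 : (zeroSet (f i1).1 ∩ zeroSet (g j1).1).Nonempty)
    (h2 : (zeroSet (f i2).1 ∩ zeroSet (g j2).1).Nonempty) :
    smallestCycleThrough (zGraph X).lineGraph ⟨s(f 0, f 1), hu⟩ ⟨s(g 0, g 1), hv⟩ = 4 := by
  have hf01 : f 0 ≠ f 1 := ((zGraph X).mem_edgeSet.mp hu).1
  have hg01 : g 0 ≠ g 1 := ((zGraph X).mem_edgeSet.mp hv).1
  have huv : (⟨s(f 0, f 1), hu⟩ : (zGraph X).edgeSet) ≠ ⟨s(g 0, g 1), hv⟩ :=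
    fun he => hne (congrArg Subtype.val he)
  have hw1 : s(f i1, g j1) ∈ (zGraph X).edgeSet := (zGraph X).mem_edgeSet.mpr ⟨hfg i1 j1, h1⟩
  have hw2 : s(f i2, g j2) ∈ (zGraph X).edgeSet := (zGraph X).mem_edgeSet.mpr ⟨hfg i2 j2, h2⟩
  have A1 : (zGraph X).lineGraph.Adj ⟨s(f 0, f 1), hu⟩ ⟨s(f i1, g j1), hw1⟩ := by
    refine lAdj ?_ (c := f i1) (fin2_mem f i1) ?_
    · exact sym2_ne_of (fun _ hh => hfg 1 j1 hh) (fun hh _ => hfg 0 j1 hh)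
    · show f i1 ∈ s(f i1, g j1); simp
  have A2 : (zGraph X).lineGraph.Adj ⟨s(f i1, g j1), hw1⟩ ⟨s(g 0, g 1), hv⟩ := by
    refine lAdj ?_ (c := g j1) ?_ (fin2_mem g j1)
    · exact sym2_ne_of (fun hh _ => hfg i1 0 hh) (fun hh _ => hfg i1 1 hh)
    · show g j1 ∈ s(f i1, g j1); simp
  have A3 : (zGraph X).lineGraph.Adj ⟨s(g 0, g 1), hv⟩ ⟨s(f i2, g j2), hw2⟩ := by
    refine lAdj ?_ (c := g j2) (fin2_mem g j2) ?_
    · exact sym2_ne_of (fun hh _ => hfg i2 0 hh.symm) (fun _ hh => hfg i2 1 hh.symm)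
    · show g j2 ∈ s(f i2, g j2); simp
  have A4 : (zGraph X).lineGraph.Adj ⟨s(f i2, g j2), hw2⟩ ⟨s(f 0, f 1), hu⟩ := by
    refine lAdj ?_ (c := f i2) ?_ (fin2_mem f i2)
    · exact sym2_ne_of (fun _ hh => hfg 1 j2 hh.symm) (fun _ hh => hfg 0 j2 hh.symm)
    · show f i2 ∈ s(f i2, g j2); simp
  have hw12 : (⟨s(f i1, g j1), hw1⟩ : (zGraph X).edgeSet) ≠ ⟨s(f i2, g j2), hw2⟩ := by
    refine edge_ne_of (fun ha hb => ?_) (fun ha _ => hfg i1 j2 ha)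
    exact hp (by rw [fin2_inj hf01 ha, fin2_inj hg01 hb])
  refine scyc_eq (n := 4) (Walk.cons A1 (Walk.cons A2 (Walk.cons A3 (Walk.cons A4 Walk.nil))))
    (isCycle4 A1 A2 A3 A4 hw12 huv) (by simp) rfl ?_
  intro w hc hm
  have h3 := hc.three_le_length
  have hne3 : w.length ≠ 3 := fun hlen =>
    not_adj f g hfg hu hv (adj_of_cycle3 huv w hm hlen)
  omega

end ZSCAux
end Part3

section Part4
set_option linter.unusedSectionVars false
namespace ZSCAux

open SimpleGraph Walk Set

variable {X : Type*} [TopologicalSpace X] [T2Space X] [CompletelyRegularSpace X]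

lemma caseC (f g : Fin 2 → {f : C(X, ℝ) // (zeroSet f).Nonempty})
    (hu : s(f 0, f 1) ∈ (zGraph X).edgeSet) (hv : s(g 0, g 1) ∈ (zGraph X).edgeSet)
    (hne : s(f 0, f 1) ≠ s(g 0, g 1)) (hfg : ∀ i j, f i ≠ g j)
    (huniq : ∃! p : Fin 2 × Fin 2, (zeroSet (f p.1).1 ∩ zeroSet (g p.2).1).Nonempty) :
    smallestCycleThrough (zGraph X).lineGraph ⟨s(f 0, f 1), hu⟩ ⟨s(g 0, g 1), hv⟩ = 5 := by
  obtain ⟨⟨i, j⟩, hPij, hun⟩ := huniq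
  have hf01 : f 0 ≠ f 1 := ((zGraph X).mem_edgeSet.mp hu).1
  have hg01 : g 0 ≠ g 1 := ((zGraph X).mem_edgeSet.mp hv).1
  have huv : (⟨s(f 0, f 1), hu⟩ : (zGraph X).edgeSet) ≠ ⟨s(g 0, g 1), hv⟩ :=
    fun he => hne (congrArg Subtype.val he)
  obtain ⟨x0, -⟩ := (f 0).2
  have hz0 : (zeroSet (0 : C(X, ℝ))).Nonempty := ⟨x0, by simp [zeroSet]⟩
  set z : {f : C(X, ℝ) // (zeroSet f).Nonempty} := ⟨0, hz0⟩ with hzdef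
  have hzmem : ∀ y : X, y ∈ zeroSet z.1 := fun y => by simp [hzdef, zeroSet]
  have hfz : ∀ l, f l ≠ z := by
    intro l h
    have hall : ∀ y : X, y ∈ zeroSet (f l).1 := fun y => by
      rw [congrArg Subtype.val h]; exact hzmem y
    have hP0 : (zeroSet (f l).1 ∩ zeroSet (g 0).1).Nonempty := by
      obtain ⟨y, hy⟩ := (g 0).2; exact ⟨y, hall y, hy⟩
    have hP1 : (zeroSet (f l).1 ∩ zeroSet (g 1).1).Nonempty := by
      obtain ⟨y, hy⟩ := (g 1).2; exact ⟨y, hall y, hy⟩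
    have e0 := hun (l, 0) hP0
    have e1 := hun (l, 1) hP1
    rw [Prod.mk.injEq] at e0 e1
    have : (0 : Fin 2) = 1 := e0.2.trans e1.2.symm
    simp at this
  have hgz : ∀ l, g l ≠ z := by
    intro l h
    have hall : ∀ y : X, y ∈ zeroSet (g l).1 := fun y => by
      rw [congrArg Subtype.val h]; exact hzmem y
    have hP0 : (zeroSet (f 0).1 ∩ zeroSet (g l).1).Nonempty := by
      obtain ⟨y, hy⟩ := (f 0).2; exact ⟨y, hy, hall y⟩
    have hP1 : (zeroSet (f 1).1 ∩ zeroSet (g l).1).Nonempty := by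
      obtain ⟨y, hy⟩ := (f 1).2; exact ⟨y, hy, hall y⟩
    have e0 := hun (0, l) hP0
    have e1 := hun (1, l) hP1
    rw [Prod.mk.injEq] at e0 e1
    have : (0 : Fin 2) = 1 := e0.1.trans e1.1.symm
    simp at this
  have hii : i ≠ i + 1 := by fin_cases i <;> decide
  have hjj : j ≠ j + 1 := by fin_cases j <;> decide
  have hw1 : s(f i, g j) ∈ (zGraph X).edgeSet := (zGraph X).mem_edgeSet.mpr ⟨hfg i j, hPij⟩
  have hw2 : s(g (j + 1), z) ∈ (zGraph X).edgeSet := by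
    refine (zGraph X).mem_edgeSet.mpr ⟨hgz (j + 1), ?_⟩
    obtain ⟨y, hy⟩ := (g (j + 1)).2
    exact ⟨y, hy, hzmem y⟩
  have hw3 : s(z, f (i + 1)) ∈ (zGraph X).edgeSet := by
    refine (zGraph X).mem_edgeSet.mpr ⟨(hfz (i + 1)).symm, ?_⟩
    obtain ⟨y, hy⟩ := (f (i + 1)).2
    exact ⟨y, hzmem y, hy⟩
  have A1 : (zGraph X).lineGraph.Adj ⟨s(f 0, f 1), hu⟩ ⟨s(f i, g j), hw1⟩ := by
    refine lAdj ?_ (c := f i) (fin2_mem f i) ?_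
    · exact sym2_ne_of (fun _ hh => hfg 1 j hh) (fun hh _ => hfg 0 j hh)
    · show f i ∈ s(f i, g j); simp
  have A2 : (zGraph X).lineGraph.Adj ⟨s(f i, g j), hw1⟩ ⟨s(g 0, g 1), hv⟩ := by
    refine lAdj ?_ (c := g j) ?_ (fin2_mem g j)
    · exact sym2_ne_of (fun hh _ => hfg i 0 hh) (fun hh _ => hfg i 1 hh)
    · show g j ∈ s(f i, g j); simp
  have A3 : (zGraph X).lineGraph.Adj ⟨s(g 0, g 1), hv⟩ ⟨s(g (j + 1), z), hw2⟩ := by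
    refine lAdj ?_ (c := g (j + 1)) (fin2_mem g (j + 1)) ?_
    · exact sym2_ne_of (fun _ hh => hgz 1 hh) (fun hh _ => hgz 0 hh)
    · show g (j + 1) ∈ s(g (j + 1), z); simp
  have A4 : (zGraph X).lineGraph.Adj ⟨s(g (j + 1), z), hw2⟩ ⟨s(z, f (i + 1)), hw3⟩ := by
    refine lAdj ?_ (c := z) ?_ ?_
    · exact sym2_ne_of (fun hh _ => hgz (j + 1) hh)
        (fun hh _ => hfg (i + 1) (j + 1) hh.symm)
    · show z ∈ s(g (j + 1), z); simp
    · show z ∈ s(z, f (i + 1)); simp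
  have A5 : (zGraph X).lineGraph.Adj ⟨s(z, f (i + 1)), hw3⟩ ⟨s(f 0, f 1), hu⟩ := by
    refine lAdj ?_ (c := f (i + 1)) ?_ (fin2_mem f (i + 1))
    · exact sym2_ne_of (fun hh _ => hfz 0 hh.symm) (fun hh _ => hfz 1 hh.symm)
    · show f (i + 1) ∈ s(z, f (i + 1)); simp
  have huw2 : (⟨s(f 0, f 1), hu⟩ : (zGraph X).edgeSet) ≠ ⟨s(g (j + 1), z), hw2⟩ :=
    edge_ne_of (fun hh _ => hfg 0 (j + 1) hh) (fun _ hh => hfg 1 (j + 1) hh)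
  have hw12 : (⟨s(f i, g j), hw1⟩ : (zGraph X).edgeSet) ≠ ⟨s(g (j + 1), z), hw2⟩ :=
    edge_ne_of (fun hh _ => hfg i (j + 1) hh) (fun hh _ => hfz i hh)
  have hw13 : (⟨s(f i, g j), hw1⟩ : (zGraph X).edgeSet) ≠ ⟨s(z, f (i + 1)), hw3⟩ :=
    edge_ne_of (fun hh _ => hfz i hh) (fun hh _ => fin2_ne hf01 hii hh)
  have hvw3 : (⟨s(g 0, g 1), hv⟩ : (zGraph X).edgeSet) ≠ ⟨s(z, f (i + 1)), hw3⟩ :=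
    edge_ne_of (fun hh _ => hgz 0 hh) (fun _ hh => hgz 1 hh)
  refine scyc_eq (n := 5)
    (Walk.cons A1 (Walk.cons A2 (Walk.cons A3 (Walk.cons A4 (Walk.cons A5 Walk.nil)))))
    (isCycle5 A1 A2 A3 A4 A5 huv huw2 hw12 hw13 hvw3) (by simp) rfl ?_
  intro w hc hm
  have h3 := hc.three_le_length
  have hne3 : w.length ≠ 3 := fun hlen =>
    not_adj f g hfg hu hv (adj_of_cycle3 huv w hm hlen)
  have hne4 : w.length ≠ 4 := by
    intro hlen
    rcases cycle4_struct huv w hc hm hlen with hadj | ⟨a, b, hab, ha1, ha2, hb1, hb2⟩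
    · exact not_adj f g hfg hu hv hadj
    · obtain ⟨i1, j1, hea, hP1⟩ := common_char f g hfg hu hv a ha1 ha2
      obtain ⟨i2, j2, heb, hP2⟩ := common_char f g hfg hu hv b hb1 hb2
      have e1 := hun (i1, j1) hP1
      have e2 := hun (i2, j2) hP2
      have e12 : (i1, j1) = (i2, j2) := e1.trans e2.symm
      rw [Prod.mk.injEq] at e12
      apply hab
      apply Subtype.ext
      rw [hea, heb, e12.1, e12.2]
  omega

lemma caseD (f g : Fin 2 → {f : C(X, ℝ) // (zeroSet f).Nonempty})
    (hu : s(f 0, f 1) ∈ (zGraph X).edgeSet) (hv : s(g 0, g 1) ∈ (zGraph X).edgeSet)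
    (hne : s(f 0, f 1) ≠ s(g 0, g 1)) (hfg : ∀ i j, f i ≠ g j)
    (hemp : ∀ i j, zeroSet (f i).1 ∩ zeroSet (g j).1 = ∅) :
    smallestCycleThrough (zGraph X).lineGraph ⟨s(f 0, f 1), hu⟩ ⟨s(g 0, g 1), hv⟩ = 6 := by
  have hf01 : f 0 ≠ f 1 := ((zGraph X).mem_edgeSet.mp hu).1
  have hg01 : g 0 ≠ g 1 := ((zGraph X).mem_edgeSet.mp hv).1
  have huv : (⟨s(f 0, f 1), hu⟩ : (zGraph X).edgeSet) ≠ ⟨s(g 0, g 1), hv⟩ :=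
    fun he => hne (congrArg Subtype.val he)
  obtain ⟨x0, -⟩ := (f 0).2
  have hz0 : (zeroSet (0 : C(X, ℝ))).Nonempty := ⟨x0, by simp [zeroSet]⟩
  set z : {f : C(X, ℝ) // (zeroSet f).Nonempty} := ⟨0, hz0⟩ with hzdef
  have hzmem : ∀ y : X, y ∈ zeroSet z.1 := fun y => by simp [hzdef, zeroSet]
  have hfz : ∀ l, f l ≠ z := by
    intro l h
    obtain ⟨y, hy⟩ := (g 0).2
    have hyl : y ∈ zeroSet (f l).1 := by rw [congrArg Subtype.val h]; exact hzmem y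
    exact Set.eq_empty_iff_forall_notMem.mp (hemp l 0) y ⟨hyl, hy⟩
  have hgz : ∀ l, g l ≠ z := by
    intro l h
    obtain ⟨y, hy⟩ := (f 0).2
    have hyl : y ∈ zeroSet (g l).1 := by rw [congrArg Subtype.val h]; exact hzmem y
    exact Set.eq_empty_iff_forall_notMem.mp (hemp 0 l) y ⟨hy, hyl⟩
  have hzedge : ∀ (a : {f : C(X, ℝ) // (zeroSet f).Nonempty}), a ≠ z →
      (zGraph X).Adj a z := by
    intro a ha
    obtain ⟨y, hy⟩ := a.2
    exact ⟨ha, y, hy, hzmem y⟩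
  have hw1 : s(f 1, z) ∈ (zGraph X).edgeSet := (zGraph X).mem_edgeSet.mpr (hzedge _ (hfz 1))
  have hw2 : s(z, g 0) ∈ (zGraph X).edgeSet :=
    (zGraph X).mem_edgeSet.mpr (hzedge _ (hgz 0)).symm
  have hw3 : s(g 1, z) ∈ (zGraph X).edgeSet := (zGraph X).mem_edgeSet.mpr (hzedge _ (hgz 1))
  have hw4 : s(z, f 0) ∈ (zGraph X).edgeSet :=
    (zGraph X).mem_edgeSet.mpr (hzedge _ (hfz 0)).symm
  have A1 : (zGraph X).lineGraph.Adj ⟨s(f 0, f 1), hu⟩ ⟨s(f 1, z), hw1⟩ := by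
    refine lAdj ?_ (c := f 1) ?_ ?_
    · exact sym2_ne_of (fun hh _ => fin2_ne hf01 (by decide) hh) (fun hh _ => hfz 0 hh)
    · show f 1 ∈ s(f 0, f 1); simp
    · show f 1 ∈ s(f 1, z); simp
  have A2 : (zGraph X).lineGraph.Adj ⟨s(f 1, z), hw1⟩ ⟨s(z, g 0), hw2⟩ := by
    refine lAdj ?_ (c := z) ?_ ?_
    · exact sym2_ne_of (fun hh _ => hfz 1 hh) (fun hh _ => hfg 1 0 hh)
    · show z ∈ s(f 1, z); simp
    · show z ∈ s(z, g 0); simp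
  have A3 : (zGraph X).lineGraph.Adj ⟨s(z, g 0), hw2⟩ ⟨s(g 0, g 1), hv⟩ := by
    refine lAdj ?_ (c := g 0) ?_ ?_
    · exact sym2_ne_of (fun hh _ => hgz 0 hh.symm) (fun hh _ => hgz 1 hh.symm)
    · show g 0 ∈ s(z, g 0); simp
    · show g 0 ∈ s(g 0, g 1); simp
  have A4 : (zGraph X).lineGraph.Adj ⟨s(g 0, g 1), hv⟩ ⟨s(g 1, z), hw3⟩ := by
    refine lAdj ?_ (c := g 1) ?_ ?_
    · exact sym2_ne_of (fun hh _ => fin2_ne hg01 (by decide) hh) (fun hh _ => hgz 0 hh)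
    · show g 1 ∈ s(g 0, g 1); simp
    · show g 1 ∈ s(g 1, z); simp
  have A5 : (zGraph X).lineGraph.Adj ⟨s(g 1, z), hw3⟩ ⟨s(z, f 0), hw4⟩ := by
    refine lAdj ?_ (c := z) ?_ ?_
    · exact sym2_ne_of (fun hh _ => hgz 1 hh) (fun hh _ => hfg 0 1 hh.symm)
    · show z ∈ s(g 1, z); simp
    · show z ∈ s(z, f 0); simp
  have A6 : (zGraph X).lineGraph.Adj ⟨s(z, f 0), hw4⟩ ⟨s(f 0, f 1), hu⟩ := by
    refine lAdj ?_ (c := f 0) ?_ ?_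
    · exact sym2_ne_of (fun hh _ => hfz 0 hh.symm) (fun hh _ => hfz 1 hh.symm)
    · show f 0 ∈ s(z, f 0); simp
    · show f 0 ∈ s(f 0, f 1); simp
  have huw2 : (⟨s(f 0, f 1), hu⟩ : (zGraph X).edgeSet) ≠ ⟨s(z, g 0), hw2⟩ :=
    edge_ne_of (fun hh _ => hfz 0 hh) (fun hh _ => hfg 0 0 hh)
  have huw3 : (⟨s(f 0, f 1), hu⟩ : (zGraph X).edgeSet) ≠ ⟨s(g 1, z), hw3⟩ :=
    edge_ne_of (fun hh _ => hfg 0 1 hh) (fun hh _ => hfz 0 hh)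
  have hw1v : (⟨s(f 1, z), hw1⟩ : (zGraph X).edgeSet) ≠ ⟨s(g 0, g 1), hv⟩ :=
    edge_ne_of (fun hh _ => hfg 1 0 hh) (fun hh _ => hfg 1 1 hh)
  have hw1w3 : (⟨s(f 1, z), hw1⟩ : (zGraph X).edgeSet) ≠ ⟨s(g 1, z), hw3⟩ :=
    edge_ne_of (fun hh _ => hfg 1 1 hh) (fun hh _ => hfz 1 hh)
  have hw1w4 : (⟨s(f 1, z), hw1⟩ : (zGraph X).edgeSet) ≠ ⟨s(z, f 0), hw4⟩ :=
    edge_ne_of (fun hh _ => hfz 1 hh) (fun hh _ => fin2_ne hf01 (by decide) hh.symm)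
  have hw2w3 : (⟨s(z, g 0), hw2⟩ : (zGraph X).edgeSet) ≠ ⟨s(g 1, z), hw3⟩ :=
    edge_ne_of (fun hh _ => hgz 1 hh.symm) (fun _ hh => fin2_ne hg01 (by decide) hh)
  have hw2w4 : (⟨s(z, g 0), hw2⟩ : (zGraph X).edgeSet) ≠ ⟨s(z, f 0), hw4⟩ :=
    edge_ne_of (fun _ hh => hfg 0 0 hh.symm) (fun hh _ => hfz 0 hh.symm)
  have hvw4 : (⟨s(g 0, g 1), hv⟩ : (zGraph X).edgeSet) ≠ ⟨s(z, f 0), hw4⟩ :=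
    edge_ne_of (fun hh _ => hgz 0 hh) (fun hh _ => hfg 0 0 hh.symm)
  refine scyc_eq (n := 6)
    (Walk.cons A1 (Walk.cons A2 (Walk.cons A3 (Walk.cons A4 (Walk.cons A5
      (Walk.cons A6 Walk.nil))))))
    (isCycle6 A1 A2 A3 A4 A5 A6 huw2 huv huw3 hw1v hw1w3 hw1w4 hw2w3 hw2w4 hvw4)
    (by simp) rfl ?_
  intro w hc hm
  by_contra hlt
  push_neg at hlt
  have hle : w.length ≤ 5 := by omega
  rcases reach2_of_short_cycle huv w hm hle with hadj | ⟨e, h1, h2⟩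
  · exact not_adj f g hfg hu hv hadj
  · obtain ⟨i1, j1, -, hP⟩ := common_char f g hfg hu hv e h1 h2
    rw [hemp i1 j1] at hP
    exact Set.not_nonempty_empty hP

end ZSCAux
end Part4

open ZSCAux in
/-- Smallest cycle lengths through two distinct vertices [f₁,f₂], [g₁,g₂] of the line
graph of Γ(C(X)), for X with more than two points. -/
theorem lineGraph_smallestCycleThrough
    (X : Type*) [TopologicalSpace X] [T2Space X] [CompletelyRegularSpace X]
    (hX : ∃ a b c : X, a ≠ b ∧ a ≠ c ∧ b ≠ c)
    (f g : Fin 2 → {f : C(X, ℝ) // (zeroSet f).Nonempty})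
    (hf : (zGraph X).Adj (f 0) (f 1)) (hg : (zGraph X).Adj (g 0) (g 1))
    (hne : s(f 0, f 1) ≠ s(g 0, g 1)) :
    (smallestCycleThrough (zGraph X).lineGraph ⟨s(f 0, f 1), (zGraph X).mem_edgeSet.mpr hf⟩
        ⟨s(g 0, g 1), (zGraph X).mem_edgeSet.mpr hg⟩ = 3 ↔
      ∃ i j : Fin 2, f i = g j) ∧
    (smallestCycleThrough (zGraph X).lineGraph ⟨s(f 0, f 1), (zGraph X).mem_edgeSet.mpr hf⟩
        ⟨s(g 0, g 1), (zGraph X).mem_edgeSet.mpr hg⟩ = 4 ↔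
      (∀ i j : Fin 2, f i ≠ g j) ∧
        ((∃ i : Fin 2, ∀ j : Fin 2, (zeroSet (f i).1 ∩ zeroSet (g j).1).Nonempty) ∨
          ∃ i j : Fin 2, (zeroSet (f 0).1 ∩ zeroSet (g i).1).Nonempty ∧
            (zeroSet (f 1).1 ∩ zeroSet (g j).1).Nonempty)) ∧
    (smallestCycleThrough (zGraph X).lineGraph ⟨s(f 0, f 1), (zGraph X).mem_edgeSet.mpr hf⟩
        ⟨s(g 0, g 1), (zGraph X).mem_edgeSet.mpr hg⟩ = 5 ↔
      (∀ i j : Fin 2, f i ≠ g j) ∧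
        ∃! p : Fin 2 × Fin 2, (zeroSet (f p.1).1 ∩ zeroSet (g p.2).1).Nonempty) ∧
    (smallestCycleThrough (zGraph X).lineGraph ⟨s(f 0, f 1), (zGraph X).mem_edgeSet.mpr hf⟩
        ⟨s(g 0, g 1), (zGraph X).mem_edgeSet.mpr hg⟩ = 6 ↔
      (∀ i j : Fin 2, f i ≠ g j) ∧
        ∀ i j : Fin 2, zeroSet (f i).1 ∩ zeroSet (g j).1 = ∅) := by
  have hu := (zGraph X).mem_edgeSet.mpr hf
  have hv := (zGraph X).mem_edgeSet.mpr hg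
  have key3 : (∃ i j : Fin 2, f i = g j) →
      smallestCycleThrough (zGraph X).lineGraph ⟨s(f 0, f 1), hu⟩ ⟨s(g 0, g 1), hv⟩ = 3 := by
    rintro ⟨i, j, hij⟩
    rcases (by omega : i = 0 ∨ i = 1) with rfl | rfl <;>
      rcases (by omega : j = 0 ∨ j = 1) with rfl | rfl
    · exact caseA hX f g hu hv (g 0) (f 1) (g 1) (by rw [hij]) rfl
        (fun hh => hne (by rw [hij, hh]))
    · exact caseA hX f g hu hv (g 1) (f 1) (g 0) (by rw [hij]) Sym2.eq_swap
        (fun hh => hne (by rw [hij, hh]; exact Sym2.eq_swap))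
    · exact caseA hX f g hu hv (g 0) (f 0) (g 1) (by rw [← hij]; exact Sym2.eq_swap) rfl
        (fun hh => hne (by rw [hh, hij]; exact Sym2.eq_swap))
    · exact caseA hX f g hu hv (g 1) (f 0) (g 0) (by rw [← hij]; exact Sym2.eq_swap)
        Sym2.eq_swap (fun hh => hne (by rw [hh, hij]))
  have key4 : (∀ i j : Fin 2, f i ≠ g j) →
      ((∃ i : Fin 2, ∀ j : Fin 2, (zeroSet (f i).1 ∩ zeroSet (g j).1).Nonempty) ∨
        ∃ i j : Fin 2, (zeroSet (f 0).1 ∩ zeroSet (g i).1).Nonempty ∧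
          (zeroSet (f 1).1 ∩ zeroSet (g j).1).Nonempty) →
      smallestCycleThrough (zGraph X).lineGraph ⟨s(f 0, f 1), hu⟩ ⟨s(g 0, g 1), hv⟩ = 4 := by
    intro hfg hB2
    rcases hB2 with ⟨i, hall⟩ | ⟨i, j, h0, h1⟩
    · exact caseB f g hu hv hne hfg i 0 i 1 (by simp) (hall 0) (hall 1)
    · exact caseB f g hu hv hne hfg 0 i 1 j (by simp) h0 h1
  have key5 := caseC f g hu hv hne
  have key6 := caseD f g hu hv hne
  have hcov := cover_cases (fun i j => (zeroSet (f i).1 ∩ zeroSet (g j).1).Nonempty)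
  by_cases hsh : ∃ i j : Fin 2, f i = g j
  · have h3 := key3 hsh
    have hcon : ∀ P : Prop, ((∀ i j : Fin 2, f i ≠ g j) ∧ P) → False := by
      rintro P ⟨hfg, -⟩
      obtain ⟨i, j, hij⟩ := hsh
      exact hfg i j hij
    refine ⟨⟨fun _ => hsh, fun _ => h3⟩,
      ⟨fun h4 => absurd (h3.symm.trans h4) (by decide), fun hh => absurd hh (hcon _)⟩,
      ⟨fun h5 => absurd (h3.symm.trans h5) (by decide), fun hh => absurd hh (hcon _)⟩,
      ⟨fun h6 => absurd (h3.symm.trans h6) (by decide), fun hh => absurd hh (hcon _)⟩⟩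
  · push_neg at hsh
    have hnsh : ¬ ∃ i j : Fin 2, f i = g j := by
      rintro ⟨i, j, hij⟩; exact hsh i j hij
    rcases hcov with hB2 | hC2 | hD2
    · have h4 := key4 hsh hB2
      exact ⟨⟨fun h => absurd (h4.symm.trans h) (by decide), fun hs => key3 hs⟩,
        ⟨fun _ => ⟨hsh, hB2⟩, fun hh => key4 hh.1 hh.2⟩,
        ⟨fun h => absurd (h4.symm.trans h) (by decide), fun hh => key5 hh.1 hh.2⟩,
        ⟨fun h => absurd (h4.symm.trans h) (by decide), fun hh => key6 hh.1 hh.2⟩⟩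
    · have h5 := key5 hsh hC2
      exact ⟨⟨fun h => absurd (h5.symm.trans h) (by decide), fun hs => key3 hs⟩,
        ⟨fun h => absurd (h5.symm.trans h) (by decide), fun hh => key4 hh.1 hh.2⟩,
        ⟨fun _ => ⟨hsh, hC2⟩, fun hh => key5 hh.1 hh.2⟩,
        ⟨fun h => absurd (h5.symm.trans h) (by decide), fun hh => key6 hh.1 hh.2⟩⟩
    · have hemp : ∀ i j : Fin 2, zeroSet (f i).1 ∩ zeroSet (g j).1 = ∅ :=
        fun i j => Set.not_nonempty_iff_eq_empty.mp (hD2 i j)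
      have h6 := key6 hsh hemp
      exact ⟨⟨fun h => absurd (h6.symm.trans h) (by decide), fun hs => key3 hs⟩,
        ⟨fun h => absurd (h6.symm.trans h) (by decide), fun hh => key4 hh.1 hh.2⟩,
        ⟨fun h => absurd (h6.symm.trans h) (by decide), fun hh => key5 hh.1 hh.2⟩,
        ⟨fun _ => ⟨hsh, hemp⟩, fun hh => key6 hh.1 hh.2⟩⟩
end
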